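/- arXiv:2405.03412 — 2 statements merged into one kernel-verified Lean document; each statement's English description precedes it below -/
import Mathlib

section
/- Let π : (M̂,ĝ) → (M,g) be a harmonic Riemannian submersion, φ, ψ : M → ℂ smooth, and φ̂ = φ∘π, ψ̂ = ψ∘π. Then τ(φ̂) = τ(φ)∘π and κ(φ̂,ψ̂) = κ(φ,ψ)∘π, where κ(φ,ψ) = g(∇φ,∇ψ) is the conformality operator. -/
open scoped BigOperators

variable {F E : Type*} [NormedAddCommGroup F] [InnerProductSpace ℝ F]
  [NormedAddCommGroup E] [InnerProductSpace ℝ E]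

/-- The Laplace–Beltrami operator `τ(φ) = Σᵢ ∂²φ/∂bᵢ²` of a complex-valued
function with respect to an orthonormal basis `b`. -/
noncomputable def lapBel {M : Type*} [NormedAddCommGroup M]
    [InnerProductSpace ℝ M] {ι : Type*} [Fintype ι]
    (b : OrthonormalBasis ι ℝ M) (φ : M → ℂ) : M → ℂ :=
  fun x => ∑ i, fderiv ℝ (fun y => fderiv ℝ φ y (b i)) x (b i)

/-- The conformality operator `κ(φ,ψ) = g(∇φ,∇ψ) = Σᵢ (∂φ/∂bᵢ)(∂ψ/∂bᵢ)`. -/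
noncomputable def confOp {M : Type*} [NormedAddCommGroup M]
    [InnerProductSpace ℝ M] {ι : Type*} [Fintype ι]
    (b : OrthonormalBasis ι ℝ M) (φ ψ : M → ℂ) : M → ℂ :=
  fun x => ∑ i, fderiv ℝ φ x (b i) * fderiv ℝ ψ x (b i)

private lemma proj_apply_eq [FiniteDimensional ℝ F] (A : F →L[ℝ] E) (z : F) :
    A (Submodule.orthogonalProjectionOnto (LinearMap.ker (A : F →ₗ[ℝ] E))ᗮ z) = A z := by
  have hmem : z - (Submodule.orthogonalProjectionOnto (LinearMap.ker (A : F →ₗ[ℝ] E))ᗮ z : F) ∈ LinearMap.ker (A : F →ₗ[ℝ] E) := by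
    have h := Submodule.sub_starProjection_mem_orthogonal (K := (LinearMap.ker (A : F →ₗ[ℝ] E))ᗮ) z
    rwa [Submodule.orthogonal_orthogonal] at h
  have h0 : A (z - (Submodule.orthogonalProjectionOnto (LinearMap.ker (A : F →ₗ[ℝ] E))ᗮ z : F)) = 0 := hmem
  rw [map_sub] at h0
  exact (sub_eq_zero.mp h0).symm

private lemma sum_inner_surj {ιF : Type*} [Fintype ιF] [FiniteDimensional ℝ F]
    (bF : OrthonormalBasis ιF ℝ F) (A : F →L[ℝ] E)
    (hs : Function.Surjective A)
    (hr : ∀ v ∈ (LinearMap.ker (A : F →ₗ[ℝ] E))ᗮ, ∀ w ∈ (LinearMap.ker (A : F →ₗ[ℝ] E))ᗮ,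
      inner ℝ (A v) (A w) = (inner ℝ v w : ℝ))
    (u w : E) :
    ∑ i, (inner ℝ (A (bF i)) u : ℝ) * (inner ℝ (A (bF i)) w : ℝ) = (inner ℝ u w : ℝ) := by
  obtain ⟨zu, hzu⟩ := hs u
  obtain ⟨zw, hzw⟩ := hs w
  set u' : F := (Submodule.orthogonalProjectionOnto (LinearMap.ker (A : F →ₗ[ℝ] E))ᗮ zu : F) with hu'
  set w' : F := (Submodule.orthogonalProjectionOnto (LinearMap.ker (A : F →ₗ[ℝ] E))ᗮ zw : F) with hw'
  have hAu : A u' = u := by rw [hu', proj_apply_eq, hzu]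
  have hAw : A w' = w := by rw [hw', proj_apply_eq, hzw]
  have hu'K : u' ∈ (LinearMap.ker (A : F →ₗ[ℝ] E))ᗮ := Submodule.coe_mem _
  have hw'K : w' ∈ (LinearMap.ker (A : F →ₗ[ℝ] E))ᗮ := Submodule.coe_mem _
  have key : ∀ (v : F) (hv : v ∈ (LinearMap.ker (A : F →ₗ[ℝ] E))ᗮ) (z : F),
      (inner ℝ (A z) (A v) : ℝ) = inner ℝ z v := by
    intro v hv z
    set p : F := (Submodule.orthogonalProjectionOnto (LinearMap.ker (A : F →ₗ[ℝ] E))ᗮ z : F) with hp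
    have h1 : A z = A p := (proj_apply_eq A z).symm
    have h2 : (inner ℝ (A p) (A v) : ℝ) = inner ℝ p v := hr p (Submodule.coe_mem _) v hv
    have h3 : (inner ℝ p v : ℝ) = inner ℝ z v := by
      have horth : z - p ∈ ((LinearMap.ker (A : F →ₗ[ℝ] E))ᗮ)ᗮ :=
        Submodule.sub_starProjection_mem_orthogonal z
      have h4 : (inner ℝ (z - p) v : ℝ) = 0 := by
        rw [real_inner_comm]
        exact (Submodule.mem_orthogonal _ _).mp horth v hv
      rw [inner_sub_left] at h4
      linarith
    rw [h1, h2, h3]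
  calc ∑ i, (inner ℝ (A (bF i)) u : ℝ) * (inner ℝ (A (bF i)) w : ℝ)
      = ∑ i, (inner ℝ u' (bF i) : ℝ) * (inner ℝ (bF i) w' : ℝ) := by
        refine Finset.sum_congr rfl fun i _ => ?_
        rw [← hAu, ← hAw, key u' hu'K, key w' hw'K, real_inner_comm (bF i) u']
    _ = inner ℝ u' w' := bF.sum_inner_mul_inner u' w'
    _ = inner ℝ (A u') (A w') := (hr u' hu'K w' hw'K).symm
    _ = inner ℝ u w := by rw [hAu, hAw]

private lemma sum_bilin {ιF ιE : Type*} [Fintype ιF] [Fintype ιE] [FiniteDimensional ℝ F]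
    (bF : OrthonormalBasis ιF ℝ F) (bE : OrthonormalBasis ιE ℝ E)
    (A : F →L[ℝ] E) (hs : Function.Surjective A)
    (hr : ∀ v ∈ (LinearMap.ker (A : F →ₗ[ℝ] E))ᗮ, ∀ w ∈ (LinearMap.ker (A : F →ₗ[ℝ] E))ᗮ,
      inner ℝ (A v) (A w) = (inner ℝ v w : ℝ))
    (B : E →ₗ[ℝ] E →ₗ[ℝ] ℂ) :
    ∑ i, B (A (bF i)) (A (bF i)) = ∑ j, B (bE j) (bE j) := by
  classical
  have expand : ∀ i, B (A (bF i)) (A (bF i)) =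
      ∑ j, ∑ k, ((inner ℝ (A (bF i)) (bE j) : ℝ) * (inner ℝ (A (bF i)) (bE k) : ℝ)) •
        B (bE j) (bE k) := by
    intro i
    conv_lhs => rw [← bE.sum_repr' (A (bF i))]
    simp only [map_sum, map_smul, LinearMap.sum_apply, LinearMap.smul_apply,
      Finset.smul_sum, smul_smul]
    rw [Finset.sum_comm]
    refine Finset.sum_congr rfl fun j _ => Finset.sum_congr rfl fun k _ => ?_
    rw [mul_comm, real_inner_comm (bE j), real_inner_comm (bE k)]
  calc ∑ i, B (A (bF i)) (A (bF i))
      = ∑ j, ∑ k, (∑ i, (inner ℝ (A (bF i)) (bE j) : ℝ) * (inner ℝ (A (bF i)) (bE k) : ℝ)) •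
          B (bE j) (bE k) := by
        simp_rw [expand]
        rw [Finset.sum_comm]
        refine Finset.sum_congr rfl fun j _ => ?_
        rw [Finset.sum_comm]
        refine Finset.sum_congr rfl fun k _ => ?_
        rw [Finset.sum_smul]
    _ = ∑ j, ∑ k, (inner ℝ (bE j) (bE k) : ℝ) • B (bE j) (bE k) := by
        simp_rw [sum_inner_surj bF A hs hr]
    _ = ∑ j, B (bE j) (bE j) := by
        have hON := bE.orthonormal
        rw [orthonormal_iff_ite] at hON
        simp [hON, ite_smul]

/-- Let `π : (M̂,ĝ) → (M,g)` be a harmonic Riemannian submersion (a Riemannian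
submersion which is a harmonic map), `φ, ψ : M → ℂ` smooth, and `φ̂ = φ∘π`,
`ψ̂ = ψ∘π`.  Then `τ(φ̂) = τ(φ)∘π` and `κ(φ̂,ψ̂) = κ(φ,ψ)∘π`. -/
theorem stmt_1 {ιF ιE : Type*} [Fintype ιF] [Fintype ιE]
    (bF : OrthonormalBasis ιF ℝ F) (bE : OrthonormalBasis ιE ℝ E)
    (π : F → E) (hπ : ContDiff ℝ (⊤ : ℕ∞) π)
    (hsubm : ∀ x, Function.Surjective (fderiv ℝ π x))
    (hriem : ∀ x, ∀ v ∈ (LinearMap.ker (fderiv ℝ π x : F →ₗ[ℝ] E))ᗮ,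
      ∀ w ∈ (LinearMap.ker (fderiv ℝ π x : F →ₗ[ℝ] E))ᗮ,
        inner ℝ (fderiv ℝ π x v) (fderiv ℝ π x w) = (inner ℝ v w : ℝ))
    (hharm : ∀ x, ∑ i, fderiv ℝ (fun y => fderiv ℝ π y (bF i)) x (bF i) = 0)
    (φ ψ : E → ℂ) (hφ : ContDiff ℝ (⊤ : ℕ∞) φ) (hψ : ContDiff ℝ (⊤ : ℕ∞) ψ) :
    lapBel bF (φ ∘ π) = (lapBel bE φ) ∘ π ∧
      confOp bF (φ ∘ π) (ψ ∘ π) = (confOp bE φ ψ) ∘ π := by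
  haveI : FiniteDimensional ℝ F := Module.Finite.of_basis bF.toBasis
  haveI : FiniteDimensional ℝ E := Module.Finite.of_basis bE.toBasis
  have hπ' : ContDiff ℝ (⊤ : ℕ∞) π := hπ.of_le (by simp)
  have hφ' : ContDiff ℝ (⊤ : ℕ∞) φ := hφ.of_le (by simp)
  have hψ' : ContDiff ℝ (⊤ : ℕ∞) ψ := hψ.of_le (by simp)
  have hπd : Differentiable ℝ π := hπ'.differentiable (by simp)
  have hφd : Differentiable ℝ φ := hφ'.differentiable (by simp)
  have hψd : Differentiable ℝ ψ := hψ'.differentiable (by simp)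
  have hDπd : Differentiable ℝ (fderiv ℝ π) :=
    ((contDiff_infty_iff_fderiv.mp hπ').2).differentiable (by simp)
  have hDφd : Differentiable ℝ (fderiv ℝ φ) :=
    ((contDiff_infty_iff_fderiv.mp hφ').2).differentiable (by simp)
  have hcomp : ∀ y, fderiv ℝ (φ ∘ π) y = (fderiv ℝ φ (π y)).comp (fderiv ℝ π y) :=
    fun y => fderiv_comp y (hφd _) (hπd y)
  have hcompψ : ∀ y, fderiv ℝ (ψ ∘ π) y = (fderiv ℝ ψ (π y)).comp (fderiv ℝ π y) :=
    fun y => fderiv_comp y (hψd _) (hπd y)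
  constructor
  · funext x
    set A : F →L[ℝ] E := fderiv ℝ π x with hA
    have hbil := sum_bilin bF bE A (hsubm x) (hriem x)
      (LinearMap.mk₂ ℝ (fun u w => fderiv ℝ (fderiv ℝ φ) (π x) u w)
        (by intros; simp) (by intros; simp) (by intros; simp) (by intros; simp))
    simp only [LinearMap.mk₂_apply] at hbil
    have hterm : ∀ i, fderiv ℝ (fun y => fderiv ℝ (φ ∘ π) y (bF i)) x (bF i) =
        fderiv ℝ φ (π x) (fderiv ℝ (fun y => fderiv ℝ π y (bF i)) x (bF i))
          + fderiv ℝ (fderiv ℝ φ) (π x) (A (bF i)) (A (bF i)) := by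
      intro i
      have hfun : (fun y => fderiv ℝ (φ ∘ π) y (bF i)) =
          fun y => (fderiv ℝ φ (π y)) ((fun z => fderiv ℝ π z (bF i)) y) := by
        funext y; rw [hcomp y]; rfl
      have hc : DifferentiableAt ℝ (fun y => fderiv ℝ φ (π y)) x :=
        (hDφd (π x)).comp x (hπd x)
      have hu : DifferentiableAt ℝ (fun y => fderiv ℝ π y (bF i)) x :=
        (hDπd.clm_apply (differentiable_const _)) x
      have hcder : fderiv ℝ (fun y => fderiv ℝ φ (π y)) x =
          (fderiv ℝ (fderiv ℝ φ) (π x)).comp A :=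
        fderiv_comp x (hDφd (π x)) (hπd x)
      rw [hfun, fderiv_clm_apply hc hu]
      simp only [ContinuousLinearMap.add_apply, ContinuousLinearMap.comp_apply,
        ContinuousLinearMap.flip_apply, hcder]
      rfl
    have hRHS : ∀ j, fderiv ℝ (fun y => fderiv ℝ φ y (bE j)) (π x) (bE j) =
        fderiv ℝ (fderiv ℝ φ) (π x) (bE j) (bE j) := by
      intro j
      rw [fderiv_clm_apply (hDφd (π x)) (differentiableAt_const _)]
      simp
    calc lapBel bF (φ ∘ π) x
        = (∑ i, fderiv ℝ φ (π x) (fderiv ℝ (fun y => fderiv ℝ π y (bF i)) x (bF i)))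
            + ∑ i, fderiv ℝ (fderiv ℝ φ) (π x) (A (bF i)) (A (bF i)) := by
          simp only [lapBel]
          rw [← Finset.sum_add_distrib]
          exact Finset.sum_congr rfl fun i _ => hterm i
      _ = ∑ i, fderiv ℝ (fderiv ℝ φ) (π x) (A (bF i)) (A (bF i)) := by
          rw [← map_sum, hharm x, map_zero, zero_add]
      _ = ∑ j, fderiv ℝ (fderiv ℝ φ) (π x) (bE j) (bE j) := hbil
      _ = (lapBel bE φ) (π x) := by
          simp only [lapBel]
          exact (Finset.sum_congr rfl fun j _ => (hRHS j).symm)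
  · funext x
    set A : F →L[ℝ] E := fderiv ℝ π x with hA
    have hbil := sum_bilin bF bE A (hsubm x) (hriem x)
      (LinearMap.mk₂ ℝ (fun u w => fderiv ℝ φ (π x) u * fderiv ℝ ψ (π x) w)
        (by intros; simp [add_mul]) (by intros; simp only [map_smul, Complex.real_smul]; ring)
        (by intros; simp [mul_add]) (by intros; simp only [map_smul, Complex.real_smul]; ring))
    simp only [LinearMap.mk₂_apply] at hbil
    calc confOp bF (φ ∘ π) (ψ ∘ π) x
        = ∑ i, fderiv ℝ φ (π x) (A (bF i)) * fderiv ℝ ψ (π x) (A (bF i)) := by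
          simp only [confOp]
          refine Finset.sum_congr rfl fun i _ => ?_
          rw [hcomp x, hcompψ x]; rfl
      _ = ∑ j, fderiv ℝ φ (π x) (bE j) * fderiv ℝ ψ (π x) (bE j) := hbil
      _ = (confOp bE φ ψ) (π x) := rfl
end

section
/- For n ≥ 2, let a ∈ ℂⁿ be nonzero and A = aᵗa ∈ ℂ^{n×n}. Then the function φ̂_a : SU(n) → ℂ, φ̂_a(z) = trace(A·z·zᵗ), has no critical points: at every z ∈ SU(n) there exists a left-invariant vector field X in the orthogonal complement 𝔭 = i·{symmetric traceless real matrices} of 𝔰𝔬(n) in 𝔰𝔲(n) with X(φ̂_a)(z) ≠ 0. -/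
/-!
Put `w = aᵀ z`, which is nonzero because `z` is invertible. Then `zᵀ A z = w wᵀ`, and
differentiating `s ↦ tr (A z e^{sX} (z e^{sX})ᵀ)` at `0` gives `tr (zᵀ A z (X + Xᵀ)) = 2 wᵀ X w`
for symmetric `X`. So for `X = i B` it suffices to find a real symmetric traceless `B` with
`wᵀ B w ≠ 0`. If `w r ≠ 0` and `s ≠ r`, the matrices `E_rs + E_sr` and `E_rr - E_ss` give
`2 w_r w_s` and `w_r² - w_s²`, which cannot both vanish.
-/

open Matrix

section

attribute [local instance] Matrix.linftyOpNormedRing Matrix.linftyOpNormedAlgebra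

theorem hasDerivAt_trace_mul_exp_smul {ι : Type*} [Fintype ι] [DecidableEq ι]
    (A z X : Matrix ι ι ℂ) :
    HasDerivAt (fun s : ℝ =>
      trace (A * (z * NormedSpace.exp (s • X)) * (z * NormedSpace.exp (s • X))ᵀ))
      (trace (zᵀ * A * z * (X + Xᵀ))) 0 := by
  let transposeCLM : Matrix ι ι ℂ →L[ℝ] Matrix ι ι ℂ :=
    (transposeLinearEquiv ι ι ℝ ℂ).toLinearMap.toContinuousLinearMap
  let traceCLM : Matrix ι ι ℂ →L[ℝ] ℂ :=
    ((traceLinearMap ι ℂ ℂ).restrictScalars ℝ).toContinuousLinearMap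
  have hexp : HasDerivAt (fun s : ℝ => NormedSpace.exp (s • X)) X 0 := by
    have h := hasDerivAt_exp_smul_const (𝕂 := ℝ) X 0
    rw [zero_smul, NormedSpace.exp_zero, one_mul] at h
    exact h
  have hcurve : HasDerivAt (fun s : ℝ => z * NormedSpace.exp (s • X)) (z * X) 0 :=
    hexp.const_mul z
  have htranspose : HasDerivAt (fun s : ℝ => (z * NormedSpace.exp (s • X))ᵀ) (z * X)ᵀ 0 :=
    transposeCLM.hasFDerivAt.comp_hasDerivAt 0 hcurve
  have hprod : HasDerivAt
      (fun s : ℝ => A * (z * NormedSpace.exp (s • X)) * (z * NormedSpace.exp (s • X))ᵀ)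
      (A * (z * X) * zᵀ + A * z * (z * X)ᵀ) 0 := by
    have h := (hcurve.const_mul A).mul htranspose
    rw [zero_smul, NormedSpace.exp_zero, mul_one] at h
    exact h
  refine (traceCLM.hasFDerivAt.comp_hasDerivAt 0 hprod).congr_deriv ?_
  change trace (A * (z * X) * zᵀ + A * z * (z * X)ᵀ) = _
  simp only [transpose_mul, mul_add, trace_add, Matrix.mul_assoc]
  rw [trace_mul_comm zᵀ, trace_mul_comm zᵀ]
  simp only [Matrix.mul_assoc]

end

theorem transpose_mul_vecMulVec_mul {ι R : Type*} [Fintype ι] [CommSemiring R]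
    (z : Matrix ι ι R) (a : ι → R) :
    zᵀ * vecMulVec a a * z = vecMulVec (a ᵥ* z) (a ᵥ* z) := by
  rw [mul_vecMulVec, vecMulVec_mul, mulVec_transpose]

theorem dotProduct_vecMul_single {ι R : Type*} [Fintype ι] [DecidableEq ι] [CommSemiring R]
    (w : ι → R) (r s : ι) (c : R) :
    w ⬝ᵥ (w ᵥ* single r s c) = w r * c * w s := by
  simp only [dotProduct, vecMul, single_apply, ite_and, mul_ite, mul_zero, Finset.sum_ite_eq,
    Finset.mem_univ, if_true]
  ring

theorem exists_symm_traceless_dotProduct_vecMul_ne_zero {ι : Type*} [Fintype ι] [DecidableEq ι]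
    [Nontrivial ι] {w : ι → ℂ} (hw : w ≠ 0) :
    ∃ B : Matrix ι ι ℝ, Bᵀ = B ∧ trace B = 0 ∧ w ⬝ᵥ (w ᵥ* B.map Complex.ofReal) ≠ 0 := by
  obtain ⟨r, hr⟩ : ∃ r, w r ≠ 0 := Function.ne_iff.mp hw
  obtain ⟨s, hsr⟩ := exists_ne r
  have hmap (i j : ι) : (single i j (1 : ℝ)).map Complex.ofReal = single i j 1 := by
    ext k l
    simp [single_apply, apply_ite Complex.ofReal]
  by_cases hs : w s = 0
  · refine ⟨single r r 1 - single s s 1, by simp, by simp, ?_⟩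
    simpa [Matrix.map_sub _ Complex.ofReal_sub, hmap, vecMul_sub, dotProduct_vecMul_single, hs] using hr
  · refine ⟨single r s 1 + single s r 1, by simp [add_comm],
      by simp [trace_single_eq_of_ne, hsr, hsr.symm], ?_⟩
    simp only [Matrix.map_add _ Complex.ofReal_add, hmap, vecMul_add, dotProduct_add,
      dotProduct_vecMul_single, mul_one]
    rw [mul_comm (w s), ← two_mul]
    simp [hr, hs]

/-- For `n ≥ 2`, let `a ∈ ℂⁿ` be nonzero and `A = aᵗa`.  Then
`φ̂_a : SU(n) → ℂ`, `φ̂_a(z) = trace(A·z·zᵗ)`, has no critical points: at every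
`z ∈ SU(n)` there is a left-invariant vector field `X` in the orthogonal
complement `𝔭 = i·{symmetric traceless real matrices}` of `𝔰𝔬(n)` in `𝔰𝔲(n)`
with `X(φ̂_a)(z) = d/ds φ̂_a(z·exp(sX))|_{s=0} ≠ 0`. -/
theorem stmt_11 {n : ℕ} (hn : 2 ≤ n) (a : Fin n → ℂ) (ha : a ≠ 0)
    (A : Matrix (Fin n) (Fin n) ℂ) (hA : A = Matrix.vecMulVec a a)
    (z : Matrix (Fin n) (Fin n) ℂ)
    (hz : z ∈ Matrix.specialUnitaryGroup (Fin n) ℂ) :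
    ∃ X : Matrix (Fin n) (Fin n) ℂ,
      (∃ B : Matrix (Fin n) (Fin n) ℝ, Bᵀ = B ∧ Matrix.trace B = 0 ∧
        X = Complex.I • B.map (Complex.ofReal)) ∧
      deriv (fun s : ℝ =>
        Matrix.trace (A * (z * NormedSpace.exp (s • X)) *
          (z * NormedSpace.exp (s • X))ᵀ)) 0 ≠ 0 := by
  have : Nontrivial (Fin n) := Fin.nontrivial_iff_two_le.mpr hn
  have hw : a ᵥ* z ≠ 0 := fun h =>
    one_ne_zero ((mem_specialUnitaryGroup_iff.mp hz).2 ▸ exists_vecMul_eq_zero_iff.mp ⟨a, ha, h⟩)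
  obtain ⟨B, hB, hBtrace, hq⟩ := exists_symm_traceless_dotProduct_vecMul_ne_zero hw
  refine ⟨Complex.I • B.map Complex.ofReal, ⟨B, hB, hBtrace, rfl⟩, ?_⟩
  have hX : (Complex.I • B.map Complex.ofReal)ᵀ = Complex.I • B.map Complex.ofReal := by
    rw [transpose_smul, ← transpose_map, hB]
  rw [(hasDerivAt_trace_mul_exp_smul A z _).deriv, hX, hA, transpose_mul_vecMulVec_mul,
    vecMulVec_mul, trace_vecMulVec, ← two_smul ℂ, vecMul_smul, vecMul_smul, dotProduct_smul,
    dotProduct_smul]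
  exact smul_ne_zero two_ne_zero (smul_ne_zero Complex.I_ne_zero hq)
end
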